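/- Let L be a finitely generated abelian group, C a commutative ring, and A = ⊕_{n∈L} A_n an L-graded ring with C ⊆ A_0, such that A is a finitely generated C-algebra. Then A_0 is a finitely generated C-algebra. -/

import Mathlib

variable {L A : Type*} [AddCommGroup L] [DecidableEq L] [CommRing A]
variable (𝒜 : L → AddSubgroup A) [GradedRing 𝒜]

/-- The degree-zero subring `A₀` acts on `A` by multiplication, making `A` an
`A₀`-algebra. -/
instance gradeZeroAlgebra : Algebra (𝒜 0) A :=
  RingHom.toAlgebra
    { toFun := Subtype.val, map_one' := rfl, map_mul' := fun _ _ => rfl,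
      map_zero' := rfl, map_add' := fun _ _ => rfl }

/-! Choose finitely many homogeneous generators `xᵢ` of `A`, of degrees `dᵢ`. Since `C ⊆ A₀`,
taking degree-zero parts is `C`-linear, so `A₀` is spanned over `C` by the monomials `xᵃ` with
`∑ aᵢ • dᵢ = 0`. These exponents form the kernel of the monoid map `ℕ^σ → L`, `a ↦ ∑ aᵢ • dᵢ`,
which is finitely generated by Gordan's lemma; the corresponding finitely many monomials
generate `A₀` as a `C`-algebra. -/

theorem Algebra.FiniteType.of_injective_of_range_fg {C B R : Type*} [CommSemiring C]
    [Semiring B] [Semiring R] [Algebra C B] [Algebra C R] (f : B →ₐ[C] R)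
    (hf : Function.Injective f) (hfg : f.range.FG) : Algebra.FiniteType C B :=
  .equiv ((Subalgebra.fg_iff_finiteType _).mp hfg) (AlgEquiv.ofInjective f hf).symm

theorem Finsupp.prod_pow_mem_adjoin_image {C R σ : Type*} [CommSemiring C] [CommSemiring R]
    [Algebra C R] (x : σ → R) {G : Set (σ →₀ ℕ)} {a : σ →₀ ℕ}
    (ha : a ∈ AddSubmonoid.closure G) :
    a.prod (x · ^ ·) ∈ Algebra.adjoin C ((fun b : σ →₀ ℕ => b.prod (x · ^ ·)) '' G) := by
  induction ha using AddSubmonoid.closure_induction with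
  | mem b hb => exact Algebra.subset_adjoin ⟨b, hb, rfl⟩
  | zero => rw [Finsupp.prod_zero_index]; exact one_mem _
  | add b c _ _ hb hc =>
    rw [Finsupp.prod_add_index' (fun _ => pow_zero _) (fun _ => pow_add _)]
    exact mul_mem hb hc

section GradedRing

universe u v

variable {ι : Type v} {R : Type u} {S : Type*} [DecidableEq ι] [AddCommMonoid ι] [CommSemiring R]
  [SetLike S R] [AddSubmonoidClass S R] (ℬ : ι → S) [GradedRing ℬ]

theorem SetLike.finsuppProd_pow_mem_graded {σ : Type*} {x : σ → R} {deg : σ → ι}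
    (hx : ∀ i, x i ∈ ℬ (deg i)) (a : σ →₀ ℕ) :
    a.prod (x · ^ ·) ∈ ℬ (Finsupp.weight deg a) := by
  rw [Finsupp.weight_apply]
  exact SetLike.prod_pow_mem_graded ℬ _ _ _ fun i _ => hx i

theorem GradedRing.exists_homogeneous_generators (C : Type*) [CommSemiring C] [Algebra C R]
    [Algebra.FiniteType C R] :
    ∃ (σ : Type (max u v)) (_ : Finite σ) (x : σ → R) (deg : σ → ι),
      (∀ i, x i ∈ ℬ (deg i)) ∧ Algebra.adjoin C (Set.range x) = ⊤ := by
  classical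
  obtain ⟨F, hF⟩ := Algebra.FiniteType.out (R := C) (A := R)
  refine ⟨Σ a : F, (DirectSum.decompose ℬ (a : R)).support, inferInstance,
    fun p => DirectSum.decompose ℬ (p.1 : R) p.2, fun p => p.2, fun p => SetLike.coe_mem _, ?_⟩
  rw [← top_le_iff, ← hF, Algebra.adjoin_le_iff]
  intro a ha
  rw [← DirectSum.sum_support_decompose ℬ a]
  exact sum_mem fun i hi => Algebra.subset_adjoin ⟨⟨⟨a, ha⟩, i, hi⟩, rfl⟩

theorem DirectSum.decompose_zero_mem_of_mem_adjoin {C : Type*} [CommSemiring C] [Algebra C R]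
    (halg : ∀ c : C, algebraMap C R c ∈ ℬ 0) {s : Set R} (T : Subalgebra C R)
    (hs : ∀ y ∈ Submonoid.closure s, (DirectSum.decompose ℬ y 0 : R) ∈ T) {z : R}
    (hz : z ∈ Algebra.adjoin C s) : (DirectSum.decompose ℬ z 0 : R) ∈ T := by
  rw [← Subalgebra.mem_toSubmodule, Algebra.adjoin_eq_span] at hz
  induction hz using Submodule.span_induction with
  | mem y hy => exact hs y hy
  | zero => simp
  | add y z _ _ hy hz => simpa using add_mem hy hz
  | smul c y _ hy =>
    rw [Algebra.smul_def, DirectSum.coe_decompose_mul_of_left_mem_zero ℬ (halg c)]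
    exact mul_mem (T.algebraMap_mem c) hy

theorem DirectSum.decompose_zero_finsuppProd_pow_mem_adjoin {C σ : Type*} [CommSemiring C]
    [Algebra C R] {x : σ → R} {deg : σ → ι} (hx : ∀ i, x i ∈ ℬ (deg i)) {G : Set (σ →₀ ℕ)}
    (hG : AddSubmonoid.closure G = (Finsupp.weight (R := ℕ) deg).eqLocusM 0) (a : σ →₀ ℕ) :
    (DirectSum.decompose ℬ (a.prod (x · ^ ·)) 0 : R) ∈
      Algebra.adjoin C ((fun b : σ →₀ ℕ => b.prod (x · ^ ·)) '' G) := by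
  have hxa := SetLike.finsuppProd_pow_mem_graded ℬ hx a
  by_cases ha : Finsupp.weight deg a = 0
  · rw [DirectSum.decompose_of_mem_same ℬ (ha ▸ hxa)]
    exact Finsupp.prod_pow_mem_adjoin_image x (hG ▸ (by simpa using ha))
  · rw [DirectSum.decompose_of_mem_ne ℬ hxa ha]
    exact zero_mem _

end GradedRing

theorem gradeZero_finiteType_over_base {C : Type*} [CommRing C]
    [Algebra C A] [Algebra C (𝒜 0)] [IsScalarTower C (𝒜 0) A]
    (h : Algebra.FiniteType C A) :
    Algebra.FiniteType C (𝒜 0) := by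
  classical
  obtain ⟨σ, _, x, deg, hx, hgen⟩ := GradedRing.exists_homogeneous_generators 𝒜 C
  have halg (c : C) : algebraMap C A c ∈ 𝒜 0 := by
    rw [IsScalarTower.algebraMap_apply C (𝒜 0) A]
    exact SetLike.coe_mem _
  obtain ⟨G, hG⟩ := AddSubmonoid.fg_eqLocusM (Finsupp.weight (R := ℕ) deg) 0
  let m : (σ →₀ ℕ) → A := fun a => a.prod (x · ^ ·)
  refine .of_injective_of_range_fg (IsScalarTower.toAlgHom C (𝒜 0) A) Subtype.val_injective
    ⟨G.image m, le_antisymm ?_ ?_⟩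
  · rw [Finset.coe_image, Algebra.adjoin_le_iff]
    rintro _ ⟨b, hb, rfl⟩
    have hb0 : Finsupp.weight deg b = 0 := by
      have : b ∈ (Finsupp.weight (R := ℕ) deg).eqLocusM 0 := hG ▸ AddSubmonoid.subset_closure hb
      simpa using this
    exact ⟨⟨m b, hb0 ▸ SetLike.finsuppProd_pow_mem_graded 𝒜 hx b⟩, rfl⟩
  · rintro _ ⟨z, rfl⟩
    rw [Finset.coe_image]
    show (z : A) ∈ Algebra.adjoin C (m '' G)
    rw [← DirectSum.decompose_of_mem_same 𝒜 z.2]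
    refine DirectSum.decompose_zero_mem_of_mem_adjoin 𝒜 halg _ ?_ (hgen ▸ Algebra.mem_top)
    intro y hy
    obtain ⟨a, rfl⟩ := Submonoid.mem_closure_range_iff.mp hy
    exact DirectSum.decompose_zero_finsuppProd_pow_mem_adjoin 𝒜 hx hG a
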